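/- Let E be a finite-dimensional real inner product space and let G be a group acting on E by surjective isometries, i.e., a group homomorphism ρ : G → (E ≃ᵢ E) (each ρ ψ is affine with linear part D(ρ ψ) a linear isometry; the pullback of a map θ : E → (E →L[ℝ] ℝ) under ρ ψ is ((ρ ψ)*θ) x = (θ ((ρ ψ) x)) ∘ D(ρ ψ)). Suppose G admits a right-invariant mean: a linear functional m on the space of bounded functions G → ℝ such that (i) m of a constant function equals that constant, (ii) m(a₁) ≥ m(a₂) whenever a₁(φ) ≥ a₂(φ) for all φ ∈ G, and (iii) m(φ ↦ a(φ ψ)) = m(a) for all ψ ∈ G. Let k ∈ ℝ and let θ : E → (E →L[ℝ] ℝ) be uniformly continuous with (1/2)‖θ x‖² ≤ k for all x ∈ E, and assume that for every ψ ∈ G the 1-form (ρ ψ)*θ - θ is exact, i.e., there is a differentiable g : E → ℝ with fderiv g x = ((ρ ψ)*θ) x - θ x for all x. Then there exists a uniformly continuous ϑ : E → (E →L[ℝ] ℝ) such that (ρ ψ)*ϑ = ϑ for every ψ ∈ G, (1/2)‖ϑ x‖² ≤ k for all x ∈ E, and ϑ - θ is exact, i.e., there is a differentiable f : E → ℝ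 with fderiv f x = ϑ x - θ x for all x. -/

import Mathlib

open BoundedContinuousFunction

variable {E : Type*} [NormedAddCommGroup E] [InnerProductSpace ℝ E] [FiniteDimensional ℝ E]

/-- The pullback `ψ*θ` of a 1-form `θ` under a surjective isometry `ψ` of `E`
(necessarily affine by Mazur–Ulam, with linear part `Dψ` a linear isometry):
`(ψ*θ)_x = θ_{ψ x} ∘ Dψ`. -/
noncomputable def isometryPullback (ψ : E ≃ᵢ E) (θ : E → (E →L[ℝ] ℝ)) :
    E → (E →L[ℝ] ℝ) := fun x =>
  (θ (ψ x)).comp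
    (ψ.toRealAffineIsometryEquiv.linearIsometryEquiv.toContinuousLinearEquiv :
      E →L[ℝ] E)

section Aux

set_option linter.unusedSectionVars false

lemma linpart_apply (ψ : E ≃ᵢ E) (v y : E) :
    ψ.toRealAffineIsometryEquiv.linearIsometryEquiv v = ψ (v + y) - ψ y := by
  have h := ψ.toRealAffineIsometryEquiv.map_vadd y v
  simp only [vadd_eq_add] at h
  rw [IsometryEquiv.coeFn_toRealAffineIsometryEquiv] at h
  rw [h]; abel

lemma linpart_comp (e₁ e₂ : E ≃ᵢ E) (v : E) :
    (e₁ * e₂).toRealAffineIsometryEquiv.linearIsometryEquiv v =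
      e₁.toRealAffineIsometryEquiv.linearIsometryEquiv
        (e₂.toRealAffineIsometryEquiv.linearIsometryEquiv v) := by
  rw [linpart_apply (e₁ * e₂) v 0, linpart_apply e₂ v 0, linpart_apply e₁ _ (e₂ 0)]
  simp [IsometryEquiv.mul_apply, sub_add_cancel]

lemma isometryPullback_apply (ψ : E ≃ᵢ E) (θ : E → (E →L[ℝ] ℝ)) (x v : E) :
    isometryPullback ψ θ x v =
      θ (ψ x) (ψ.toRealAffineIsometryEquiv.linearIsometryEquiv v) := rfl

/-- Package a pointwise bounded function on a discrete space as a bounded continuous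
function. -/
noncomputable def mkBdd {G : Type*} [TopologicalSpace G] [DiscreteTopology G]
    (a : G → ℝ) (C : ℝ) (h : ∀ φ, |a φ| ≤ C) : G →ᵇ ℝ :=
  BoundedContinuousFunction.ofNormedAddCommGroup a continuous_of_discreteTopology C
    (fun φ => by simpa [Real.norm_eq_abs] using h φ)

@[simp] lemma mkBdd_apply {G : Type*} [TopologicalSpace G] [DiscreteTopology G]
    (a : G → ℝ) (C : ℝ) (h : ∀ φ, |a φ| ≤ C) (φ : G) : mkBdd a C h φ = a φ := rfl

variable {G : Type*} [Group G] [TopologicalSpace G] [DiscreteTopology G]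

lemma pb_bound (ρ : G →* (E ≃ᵢ E)) (θ : E → (E →L[ℝ] ℝ)) {B : ℝ}
    (hθB : ∀ x, ‖θ x‖ ≤ B) (x v : E) (φ : G) :
    |θ (ρ φ x) ((ρ φ).toRealAffineIsometryEquiv.linearIsometryEquiv v)| ≤ B * ‖v‖ := by
  rw [← Real.norm_eq_abs]
  calc ‖θ (ρ φ x) ((ρ φ).toRealAffineIsometryEquiv.linearIsometryEquiv v)‖
      ≤ ‖θ (ρ φ x)‖ * ‖(ρ φ).toRealAffineIsometryEquiv.linearIsometryEquiv v‖ :=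
        (θ (ρ φ x)).le_opNorm _
    _ = ‖θ (ρ φ x)‖ * ‖v‖ := by rw [LinearIsometryEquiv.norm_map]
    _ ≤ B * ‖v‖ := mul_le_mul_of_nonneg_right (hθB _) (norm_nonneg v)

/-- The bounded function `φ ↦ θ_{ρ(φ)x}(D(ρ φ) v)`. -/
noncomputable def pbBdd (ρ : G →* (E ≃ᵢ E)) (θ : E → (E →L[ℝ] ℝ)) {B : ℝ}
    (hθB : ∀ x, ‖θ x‖ ≤ B) (x v : E) : G →ᵇ ℝ :=
  mkBdd (fun φ => θ (ρ φ x) ((ρ φ).toRealAffineIsometryEquiv.linearIsometryEquiv v))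
    (B * ‖v‖) (pb_bound ρ θ hθB x v)

@[simp] lemma pbBdd_apply (ρ : G →* (E ≃ᵢ E)) (θ : E → (E →L[ℝ] ℝ)) {B : ℝ}
    (hθB : ∀ x, ‖θ x‖ ≤ B) (x v : E) (φ : G) :
    pbBdd ρ θ hθB x v φ =
      θ (ρ φ x) ((ρ φ).toRealAffineIsometryEquiv.linearIsometryEquiv v) := rfl

/-- The averaged 1-form `ϑ_x(v) = m(φ ↦ θ_{ρ(φ)x}(D(ρ φ) v))`. -/
noncomputable def avgForm (ρ : G →* (E ≃ᵢ E)) (m : (G →ᵇ ℝ) →ₗ[ℝ] ℝ)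
    (θ : E → (E →L[ℝ] ℝ)) {B : ℝ} (hθB : ∀ x, ‖θ x‖ ≤ B)
    (hm : ∀ (a : G →ᵇ ℝ) (C : ℝ), (∀ φ, |a φ| ≤ C) → |m a| ≤ C) :
    E → (E →L[ℝ] ℝ) := fun x =>
  LinearMap.mkContinuous
    { toFun := fun v => m (pbBdd ρ θ hθB x v)
      map_add' := fun v w => by
        have h : pbBdd ρ θ hθB x (v + w) = pbBdd ρ θ hθB x v + pbBdd ρ θ hθB x w := by
          ext φ; simp [map_add]
        rw [h, map_add]
      map_smul' := fun c v => by
        have h : pbBdd ρ θ hθB x (c • v) = c • pbBdd ρ θ hθB x v := by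
          ext φ; simp [map_smul, smul_eq_mul]
        rw [RingHom.id_apply, h, map_smul, smul_eq_mul] }
    B (fun v => by
      rw [Real.norm_eq_abs]
      exact hm _ _ (pb_bound ρ θ hθB x v))

@[simp] lemma avgForm_apply (ρ : G →* (E ≃ᵢ E)) (m : (G →ᵇ ℝ) →ₗ[ℝ] ℝ)
    (θ : E → (E →L[ℝ] ℝ)) {B : ℝ} (hθB : ∀ x, ‖θ x‖ ≤ B)
    (hm : ∀ (a : G →ᵇ ℝ) (C : ℝ), (∀ φ, |a φ| ≤ C) → |m a| ≤ C) (x v : E) :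
    avgForm ρ m θ hθB hm x v = m (pbBdd ρ θ hθB x v) := rfl

lemma avgForm_norm_le (ρ : G →* (E ≃ᵢ E)) (m : (G →ᵇ ℝ) →ₗ[ℝ] ℝ)
    (θ : E → (E →L[ℝ] ℝ)) {B : ℝ} (hB0 : 0 ≤ B) (hθB : ∀ x, ‖θ x‖ ≤ B)
    (hm : ∀ (a : G →ᵇ ℝ) (C : ℝ), (∀ φ, |a φ| ≤ C) → |m a| ≤ C) (x : E) :
    ‖avgForm ρ m θ hθB hm x‖ ≤ B :=
  LinearMap.mkContinuous_norm_le _ hB0 _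

end Aux

/-- Lemma 5.2 of the paper: let a group `G` (with the discrete topology, so that `G →ᵇ ℝ`
is the space `ℓ∞(G)` of bounded functions) act on `E` by surjective isometries via
`ρ : G →* (E ≃ᵢ E)`, and suppose `G` carries a right-invariant mean `m`:  a linear
functional on `ℓ∞(G)` sending constants to themselves, monotone, and invariant under
right translations.  If `θ` is a uniformly continuous 1-form with `(1/2)‖θ_x‖² ≤ k` such
that `(ρ ψ)*θ - θ` is exact for every `ψ ∈ G`, then there is a uniformly continuous
1-form `ϑ`, invariant under the pullback by every `ρ ψ`, with `(1/2)‖ϑ_x‖² ≤ k`, such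
that `ϑ - θ` is exact. -/
theorem invariant_bounded_primitive_of_amenable
    {G : Type*} [Group G] [TopologicalSpace G] [DiscreteTopology G]
    (ρ : G →* (E ≃ᵢ E))
    (m : (G →ᵇ ℝ) →ₗ[ℝ] ℝ)
    (hm_const : ∀ c : ℝ, m (BoundedContinuousFunction.const G c) = c)
    (hm_mono : ∀ a₁ a₂ : G →ᵇ ℝ, (∀ φ : G, a₂ φ ≤ a₁ φ) → m a₂ ≤ m a₁)
    (hm_inv : ∀ (a : G →ᵇ ℝ) (ψ : G),
      m (a.compContinuous ⟨fun φ : G => φ * ψ, continuous_of_discreteTopology⟩) = m a)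
    (k : ℝ) (θ : E → (E →L[ℝ] ℝ)) (hθc : UniformContinuous θ)
    (hθk : ∀ x : E, (1/2) * ‖θ x‖ ^ 2 ≤ k)
    (hexact : ∀ ψ : G, ∃ g : E → ℝ, Differentiable ℝ g ∧
      ∀ x : E, fderiv ℝ g x = isometryPullback (ρ ψ) θ x - θ x) :
    ∃ ϑ : E → (E →L[ℝ] ℝ), UniformContinuous ϑ ∧
      (∀ ψ : G, isometryPullback (ρ ψ) ϑ = ϑ) ∧
      (∀ x : E, (1/2) * ‖ϑ x‖ ^ 2 ≤ k) ∧
      ∃ f : E → ℝ, Differentiable ℝ f ∧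
        ∀ x : E, fderiv ℝ f x = ϑ x - θ x := by
  classical
  have hk0 : 0 ≤ k := le_trans (by positivity) (hθk 0)
  set B : ℝ := Real.sqrt (2 * k) with hBdef
  have hB0 : 0 ≤ B := Real.sqrt_nonneg _
  have hBsq : B ^ 2 = 2 * k := Real.sq_sqrt (by linarith)
  have hθB : ∀ x, ‖θ x‖ ≤ B := by
    intro x
    nlinarith [hθk x, norm_nonneg (θ x), hB0]
  -- the mean is bounded by the sup norm
  have mean_le : ∀ (a : G →ᵇ ℝ) (C : ℝ), (∀ φ, |a φ| ≤ C) → |m a| ≤ C := by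
    intro a C h
    have h1 : m a ≤ C := by
      have := hm_mono (BoundedContinuousFunction.const G C) a
        (fun φ => by simpa using (abs_le.1 (h φ)).2)
      rwa [hm_const] at this
    have h2 : -C ≤ m a := by
      have := hm_mono a (BoundedContinuousFunction.const G (-C))
        (fun φ => by simpa using (abs_le.1 (h φ)).1)
      rwa [hm_const] at this
    exact abs_le.2 ⟨h2, h1⟩
  set ϑ : E → (E →L[ℝ] ℝ) := avgForm ρ m θ hθB mean_le with hϑdef
  have hϑapp : ∀ x v, ϑ x v = m (pbBdd ρ θ hθB x v) := fun x v => rfl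
  have hϑB : ∀ x, ‖ϑ x‖ ≤ B := avgForm_norm_le ρ m θ hB0 hθB mean_le
  -- uniform continuity of ϑ
  have hϑc : UniformContinuous ϑ := by
    rw [Metric.uniformContinuous_iff]
    intro ε hε
    obtain ⟨δ, hδ0, hδ⟩ := Metric.uniformContinuous_iff.1 hθc (ε / 2) (by linarith)
    refine ⟨δ, hδ0, fun {x y} hxy => ?_⟩
    rw [dist_eq_norm]
    have hle : ‖ϑ x - ϑ y‖ ≤ ε / 2 := by
      refine ContinuousLinearMap.opNorm_le_bound _ (by linarith) (fun v => ?_)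
      rw [ContinuousLinearMap.sub_apply]
      have heq : ϑ x v - ϑ y v = m (pbBdd ρ θ hθB x v - pbBdd ρ θ hθB y v) := by
        rw [map_sub, hϑapp, hϑapp]
      rw [Real.norm_eq_abs, heq]
      refine mean_le _ _ (fun φ => ?_)
      simp only [BoundedContinuousFunction.sub_apply, pbBdd_apply]
      rw [← ContinuousLinearMap.sub_apply, ← Real.norm_eq_abs]
      have hdist : ‖θ (ρ φ x) - θ (ρ φ y)‖ ≤ ε / 2 := by
        rw [← dist_eq_norm]
        exact le_of_lt (hδ (by rw [IsometryEquiv.dist_eq]; exact hxy))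
      calc ‖(θ (ρ φ x) - θ (ρ φ y)) ((ρ φ).toRealAffineIsometryEquiv.linearIsometryEquiv v)‖
          ≤ ‖θ (ρ φ x) - θ (ρ φ y)‖ *
            ‖(ρ φ).toRealAffineIsometryEquiv.linearIsometryEquiv v‖ :=
            (θ (ρ φ x) - θ (ρ φ y)).le_opNorm _
        _ = ‖θ (ρ φ x) - θ (ρ φ y)‖ * ‖v‖ := by rw [LinearIsometryEquiv.norm_map]
        _ ≤ (ε / 2) * ‖v‖ := mul_le_mul_of_nonneg_right hdist (norm_nonneg v)
    linarith [hle]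
  -- invariance of ϑ
  have hϑinv : ∀ ψ : G, isometryPullback (ρ ψ) ϑ = ϑ := by
    intro ψ
    funext x
    refine ContinuousLinearMap.ext (fun v => ?_)
    rw [isometryPullback_apply, hϑapp, hϑapp]
    have key : pbBdd ρ θ hθB (ρ ψ x) ((ρ ψ).toRealAffineIsometryEquiv.linearIsometryEquiv v)
        = (pbBdd ρ θ hθB x v).compContinuous
            ⟨fun φ : G => φ * ψ, continuous_of_discreteTopology⟩ := by
      ext φ
      simp only [pbBdd_apply, BoundedContinuousFunction.coe_compContinuous,
        Function.comp_apply, ContinuousMap.coe_mk]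
      rw [map_mul ρ, IsometryEquiv.mul_apply, linpart_comp]
    rw [key, hm_inv]
  -- the norm bound
  have hϑk : ∀ x : E, (1/2) * ‖ϑ x‖ ^ 2 ≤ k := by
    intro x
    nlinarith [hϑB x, norm_nonneg (ϑ x), hBsq, hB0]
  -- exactness
  choose g hgdiff hgderiv using hexact
  have hg'diff : ∀ ψ, Differentiable ℝ (fun x => g ψ x - g ψ 0) :=
    fun ψ => (hgdiff ψ).sub_const _
  have hg'deriv : ∀ ψ x, fderiv ℝ (fun x => g ψ x - g ψ 0) x
      = isometryPullback (ρ ψ) θ x - θ x := by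
    intro ψ x
    rw [fderiv_sub_const]
    exact hgderiv ψ x
  have hpullB : ∀ (ψ : E ≃ᵢ E) (x : E), ‖isometryPullback ψ θ x‖ ≤ B := by
    intro ψ x
    refine ContinuousLinearMap.opNorm_le_bound _ hB0 (fun v => ?_)
    rw [isometryPullback_apply]
    calc ‖θ (ψ x) (ψ.toRealAffineIsometryEquiv.linearIsometryEquiv v)‖
        ≤ ‖θ (ψ x)‖ * ‖ψ.toRealAffineIsometryEquiv.linearIsometryEquiv v‖ :=
          (θ (ψ x)).le_opNorm _
      _ = ‖θ (ψ x)‖ * ‖v‖ := by rw [LinearIsometryEquiv.norm_map]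
      _ ≤ B * ‖v‖ := mul_le_mul_of_nonneg_right (hθB _) (norm_nonneg v)
  have hg'lip : ∀ (ψ : G) (x : E), |g ψ x - g ψ 0| ≤ (2 * B) * ‖x‖ := by
    intro ψ x
    have h := Convex.norm_image_sub_le_of_norm_fderiv_le
      (f := fun x => g ψ x - g ψ 0) (s := Set.univ) (C := 2 * B)
      (fun u _ => (hg'diff ψ).differentiableAt)
      (fun u _ => by
        rw [hg'deriv]
        calc ‖isometryPullback (ρ ψ) θ u - θ u‖
            ≤ ‖isometryPullback (ρ ψ) θ u‖ + ‖θ u‖ := norm_sub_le _ _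
          _ ≤ B + B := add_le_add (hpullB _ _) (hθB _)
          _ = 2 * B := by ring)
      convex_univ (Set.mem_univ 0) (Set.mem_univ x)
    simpa [Real.norm_eq_abs] using h
  set F : E → ℝ := fun x =>
    m (mkBdd (fun ψ => g ψ x - g ψ 0) ((2 * B) * ‖x‖) (fun ψ => hg'lip ψ x)) with hFdef
  have hF : ∀ x, HasFDerivAt F (ϑ x - θ x) x := by
    intro x
    rw [hasFDerivAt_iff_isLittleO_nhds_zero, Asymptotics.isLittleO_iff]
    intro c hc
    obtain ⟨δ, hδ0, hδ⟩ := Metric.uniformContinuous_iff.1 hθc (c / 2) (by linarith)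
    rw [Metric.eventually_nhds_iff]
    refine ⟨δ, hδ0, fun {w} hw => ?_⟩
    rw [dist_zero_right] at hw
    -- pointwise estimate for each ψ
    have hptw : ∀ ψ : G,
        |(g ψ (x + w) - g ψ 0) - (g ψ x - g ψ 0)
          - (θ (ρ ψ x) ((ρ ψ).toRealAffineIsometryEquiv.linearIsometryEquiv w) - θ x w)|
          ≤ c * ‖w‖ := by
      intro ψ
      have hAw : (fderiv ℝ (fun x => g ψ x - g ψ 0) x) w
          = θ (ρ ψ x) ((ρ ψ).toRealAffineIsometryEquiv.linearIsometryEquiv w) - θ x w := by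
        rw [hg'deriv]
        simp [ContinuousLinearMap.sub_apply, isometryPullback_apply]
      rw [← hAw]
      set A : E →L[ℝ] ℝ := fderiv ℝ (fun x => g ψ x - g ψ 0) x with hA
      have hbd : ∀ u ∈ Metric.ball x δ,
          ‖fderiv ℝ (fun u => (g ψ u - g ψ 0) - A u) u‖ ≤ c := by
        intro u hu
        have hfd : fderiv ℝ (fun u => (g ψ u - g ψ 0) - A u) u
            = fderiv ℝ (fun u => g ψ u - g ψ 0) u - A := by
          rw [fderiv_fun_sub ((hg'diff ψ) u) A.differentiableAt, A.fderiv]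
        rw [hfd, hA, hg'deriv, hg'deriv]
        have hre : isometryPullback (ρ ψ) θ u - θ u - (isometryPullback (ρ ψ) θ x - θ x)
            = (isometryPullback (ρ ψ) θ u - isometryPullback (ρ ψ) θ x) - (θ u - θ x) := by
          abel
        rw [hre]
        have hux : dist u x < δ := Metric.mem_ball.1 hu
        have h1 : ‖isometryPullback (ρ ψ) θ u - isometryPullback (ρ ψ) θ x‖ ≤ c / 2 := by
          refine ContinuousLinearMap.opNorm_le_bound _ (by linarith) (fun v => ?_)
          have happ : (isometryPullback (ρ ψ) θ u - isometryPullback (ρ ψ) θ x) v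
              = (θ (ρ ψ u) - θ (ρ ψ x))
                  ((ρ ψ).toRealAffineIsometryEquiv.linearIsometryEquiv v) := by
            simp [ContinuousLinearMap.sub_apply, isometryPullback_apply]
          rw [happ]
          have hdist : ‖θ (ρ ψ u) - θ (ρ ψ x)‖ ≤ c / 2 := by
            rw [← dist_eq_norm]
            exact le_of_lt (hδ (by rw [IsometryEquiv.dist_eq]; exact hux))
          calc ‖(θ (ρ ψ u) - θ (ρ ψ x))
                ((ρ ψ).toRealAffineIsometryEquiv.linearIsometryEquiv v)‖
              ≤ ‖θ (ρ ψ u) - θ (ρ ψ x)‖ *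
                ‖(ρ ψ).toRealAffineIsometryEquiv.linearIsometryEquiv v‖ :=
                (θ (ρ ψ u) - θ (ρ ψ x)).le_opNorm _
            _ = ‖θ (ρ ψ u) - θ (ρ ψ x)‖ * ‖v‖ := by rw [LinearIsometryEquiv.norm_map]
            _ ≤ (c / 2) * ‖v‖ := mul_le_mul_of_nonneg_right hdist (norm_nonneg v)
        have h2 : ‖θ u - θ x‖ ≤ c / 2 := by
          rw [← dist_eq_norm]
          exact le_of_lt (hδ hux)
        calc ‖(isometryPullback (ρ ψ) θ u - isometryPullback (ρ ψ) θ x) - (θ u - θ x)‖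
            ≤ ‖isometryPullback (ρ ψ) θ u - isometryPullback (ρ ψ) θ x‖ + ‖θ u - θ x‖ :=
              norm_sub_le _ _
          _ ≤ c / 2 + c / 2 := add_le_add h1 h2
          _ = c := by ring
      have hmem : x + w ∈ Metric.ball x δ := by
        rw [Metric.mem_ball, dist_eq_norm, add_sub_cancel_left]
        exact hw
      have key := Convex.norm_image_sub_le_of_norm_fderiv_le
        (f := fun u => (g ψ u - g ψ 0) - A u) (s := Metric.ball x δ) (C := c)
        (fun u _ => ((hg'diff ψ) u).sub A.differentiableAt)
        hbd (convex_ball x δ) (Metric.mem_ball_self hδ0) hmem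
      have hrearr : ((g ψ (x + w) - g ψ 0) - A (x + w)) - ((g ψ x - g ψ 0) - A x)
          = (g ψ (x + w) - g ψ 0) - (g ψ x - g ψ 0) - A w := by
        rw [map_add]; ring
      rw [hrearr, add_sub_cancel_left, Real.norm_eq_abs] at key
      exact key
    -- assemble the mean estimate
    have hmean : F (x + w) - F x - ((ϑ x - θ x) w)
        = m (mkBdd (fun ψ => g ψ (x + w) - g ψ 0) ((2 * B) * ‖x + w‖)
              (fun ψ => hg'lip ψ (x + w))
            - mkBdd (fun ψ => g ψ x - g ψ 0) ((2 * B) * ‖x‖) (fun ψ => hg'lip ψ x)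
            - pbBdd ρ θ hθB x w + BoundedContinuousFunction.const G (θ x w)) := by
      rw [map_add, map_sub, map_sub, hm_const]
      simp only [hFdef, ContinuousLinearMap.sub_apply, hϑapp]
      ring
    rw [hmean, Real.norm_eq_abs]
    refine le_trans (mean_le _ (c * ‖w‖) (fun ψ => ?_)) (le_refl _)
    simp only [BoundedContinuousFunction.sub_apply, BoundedContinuousFunction.add_apply,
      BoundedContinuousFunction.const_apply, mkBdd_apply, pbBdd_apply]
    have heq : (g ψ (x + w) - g ψ 0) - (g ψ x - g ψ 0)
        - θ (ρ ψ x) ((ρ ψ).toRealAffineIsometryEquiv.linearIsometryEquiv w) + θ x w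
        = (g ψ (x + w) - g ψ 0) - (g ψ x - g ψ 0)
        - (θ (ρ ψ x) ((ρ ψ).toRealAffineIsometryEquiv.linearIsometryEquiv w) - θ x w) := by
      ring
    rw [heq]
    exact hptw ψ
  exact ⟨ϑ, hϑc, hϑinv, hϑk,
    F, fun x => (hF x).differentiableAt, fun x => (hF x).fderiv⟩
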